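/- arXiv:1206.6009 — 4 statements merged into one kernel-verified Lean document; each statement's English description precedes it below -/
import Mathlib

section
/- Let Λ ⊆ ℤ^d be a finite set that is connected as a subgraph of the nearest-neighbour graph on ℤ^d, let j ∈ Λ, y ∈ ℝ^m, a > 0 and p > 0. Then ∫_{(ℝ^m)^Λ} 1{|X(j)-y| < 1} · exp(−a Σ_{i∈Λ} Σ_{k=1}^d |X(i+e_k) − X(i)|^p) Π_{i∈Λ} dX(i) ≤ ω(m) · (a^{−m/p} c(p,m))^{|Λ|−1}, where ω(m) is the volume of the unit ball in ℝ^m and c(p,m) = ∫_{ℝ^m} exp(−|ξ|^p) dξ. -/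
/-!
Pick a spanning tree of the nearest-neighbour graph on `Λ` rooted at `j`, i.e. a parent map `par`
along which the graph distance to `j` strictly decreases. Distinct tree edges are distinct lattice
bonds, so discarding all other (nonnegative) bond terms only enlarges the integrand, which then
factorises as `1{X j ∈ B(y, 1)} * ∏_{i ≠ j} f (X i - X (par i))` with `f ξ = exp (-a ‖ξ‖ ^ p)`.
Integrating the variables from the leaves inwards, each `X i` with `i ≠ j` contributes
`∫ f = a ^ (-m / p) * c(p, m)` by translation invariance and scaling, and `X j` contributes the
volume of the unit ball.
-/

open scoped ENNReal
open MeasureTheory Finset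

theorem SimpleGraph.Connected.exists_parent_rank {V : Type*} {G : SimpleGraph V}
    (hG : G.Connected) (j : V) :
    ∃ (par : V → V) (rank : V → ℕ), ∀ i ≠ j, G.Adj i (par i) ∧ rank (par i) < rank i := by
  have step : ∀ i, ∃ v, i ≠ j → G.Adj i v ∧ G.dist v j < G.dist i j := by
    intro i
    obtain ⟨w, hw⟩ := hG.exists_walk_length_eq_dist i j
    cases w with
    | nil => exact ⟨j, fun h => (h rfl).elim⟩
    | cons hadj q =>
      refine ⟨_, fun _ => ⟨hadj, ?_⟩⟩
      have := SimpleGraph.dist_le q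
      rw [SimpleGraph.Walk.length_cons] at hw
      omega
  choose par hpar using step
  exact ⟨par, (G.dist · j), hpar⟩

theorem eq_of_sym2_parent_eq {V : Type*} {j : V} {par : V → V} {rank : V → ℕ}
    (hrank : ∀ i ≠ j, rank (par i) < rank i) {i₁ i₂ : V} (h₁ : i₁ ≠ j) (h₂ : i₂ ≠ j)
    (h : s(i₁, par i₁) = s(i₂, par i₂)) : i₁ = i₂ := by
  rcases Sym2.eq_iff.1 h with ⟨h, -⟩ | ⟨h₁₂, h₂₁⟩
  · exact h
  · have h₁' := hrank i₁ h₁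
    rw [h₂₁, h₁₂] at h₁'
    exact absurd h₁' (hrank i₂ h₂).asymm

theorem exists_eq_add_single_of_sum_abs_sub_eq_one {d : ℕ} {u v : Fin d → ℤ}
    (h : ∑ k, |u k - v k| = 1) :
    ∃ k, v = u + Pi.single k 1 ∨ u = v + Pi.single k 1 := by
  obtain ⟨k, -, hk⟩ : ∃ k ∈ univ, |u k - v k| ≠ 0 := by
    by_contra! h0
    simp [sum_eq_zero h0] at h
  have hsplit : |u k - v k| + ∑ l ∈ univ.erase k, |u l - v l| = 1 :=
    (add_sum_erase univ (fun l => |u l - v l|) (mem_univ k)).trans h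
  have hrest_nonneg : 0 ≤ ∑ l ∈ univ.erase k, |u l - v l| := sum_nonneg fun _ _ => abs_nonneg _
  have hk_pos : 0 < |u k - v k| := (abs_nonneg _).lt_of_ne' hk
  have hrest : ∀ l ≠ k, u l = v l := fun l hl => by
    have := (sum_eq_zero_iff_of_nonneg fun _ _ => abs_nonneg _).1
      (show ∑ l ∈ univ.erase k, |u l - v l| = 0 by omega) l (mem_erase.2 ⟨hl, mem_univ l⟩)
    simpa [sub_eq_zero] using this
  refine ⟨k, ?_⟩
  rcases (abs_eq zero_le_one).1 (show |u k - v k| = 1 by omega) with hk1 | hk1 <;>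
    [right; left] <;> ext l <;> rcases eq_or_ne l k with rfl | hl <;> simp [*] <;> omega

section TreeIntegral

variable {ι G : Type*} [Fintype ι] [DecidableEq ι] [MeasurableSpace G] [AddGroup G]
  [MeasurableAdd G] [MeasurableSub₂ G] (μ : Measure G) [SigmaFinite μ] [μ.IsAddRightInvariant]
  {j : ι} {par : ι → ι} {rank : ι → ℕ} {F₀ F : G → ℝ≥0∞}

omit [MeasurableAdd G] in
theorem measurable_mul_prod_sub_parent (hF₀ : Measurable F₀) (hF : Measurable F) :
    Measurable fun X : ι → G => F₀ (X j) * ∏ i ∈ univ.erase j, F (X i - X (par i)) :=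
  (hF₀.comp (measurable_pi_apply j)).mul <| Finset.measurable_prod _ fun i _ =>
    hF.comp ((measurable_pi_apply i).sub (measurable_pi_apply (par i)))

theorem lmarginal_mul_prod_sub_parent (hrank : ∀ i ≠ j, rank (par i) < rank i)
    (hF₀ : Measurable F₀) (hF : Measurable F) (s : Finset ι) (hjs : j ∉ s)
    (hs : ∀ i ≠ j, par i ∈ s → i ∈ s) (X : ι → G) :
    (∫⋯∫⁻_s, fun X => F₀ (X j) * ∏ i ∈ univ.erase j, F (X i - X (par i)) ∂fun _ => μ) X
      = F₀ (X j) * (∫⁻ x, F x ∂μ) ^ #s * ∏ i ∈ univ.erase j \ s, F (X i - X (par i)) := by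
  -- Peeling off the vertex of least rank first, its parent lies outside the remaining set, so
  -- exactly one factor `F (X a - X (par a))` depends on the variable integrated out.
  induction s using Finset.induction_on_min_value rank generalizing X with
  | empty => simp
  | insert a s has hmin ih =>
    have haj : a ≠ j := fun h => hjs (h ▸ mem_insert_self a s)
    have hpar_ne : par a ≠ a := fun h => (hrank a haj).ne (congrArg rank h)
    have hpar_a : par a ∉ insert a s := fun h =>
      (mem_insert.1 h).elim hpar_ne fun h => (hmin _ h).not_gt (hrank a haj)
    have hs' : ∀ i ≠ j, par i ∈ s → i ∈ s := fun i hij hi =>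
      ((mem_insert.1 (hs i hij (mem_insert_of_mem hi))).resolve_left
        fun h => hpar_a (h ▸ mem_insert_of_mem hi))
    have ha : a ∈ univ.erase j \ s := by simp [haj, has]
    have hfix : ∀ x, ∀ i ∈ (univ.erase j \ s).erase a,
        F (Function.update X a x i - Function.update X a x (par i)) = F (X i - X (par i)) := by
      intro x i hi
      have hia : i ≠ a := ne_of_mem_erase hi
      obtain ⟨hij, his⟩ := mem_sdiff.1 (mem_of_mem_erase hi)
      have hparia : par i ≠ a := fun h =>
        his ((mem_insert.1 (hs i (ne_of_mem_erase hij) (h ▸ mem_insert_self a s))).resolve_left hia)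
      rw [Function.update_of_ne hia, Function.update_of_ne hparia]
    rw [lmarginal_insert _ (measurable_mul_prod_sub_parent hF₀ hF) has]
    simp_rw [ih (fun h => hjs (mem_insert_of_mem h)) hs', ← mul_prod_erase _ _ ha,
      prod_congr rfl (hfix _), Function.update_of_ne haj.symm, Function.update_self,
      Function.update_of_ne hpar_ne]
    have hmeas_a : Measurable fun x => F (x - X (par a)) := hF.comp (measurable_sub_const _)
    rw [lintegral_const_mul _ (hmeas_a.mul_const _), lintegral_mul_const _ hmeas_a,
      lintegral_sub_right_eq_self, card_insert_of_notMem has, sdiff_insert, pow_succ]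
    ring

theorem lintegral_mul_prod_sub_parent (hrank : ∀ i ≠ j, rank (par i) < rank i)
    (hF₀ : Measurable F₀) (hF : Measurable F) :
    ∫⁻ X, F₀ (X j) * ∏ i ∈ univ.erase j, F (X i - X (par i)) ∂(Measure.pi fun _ => μ)
      = (∫⁻ x, F₀ x ∂μ) * (∫⁻ x, F x ∂μ) ^ (Fintype.card ι - 1) := by
  rw [lintegral_eq_lmarginal_univ 0,
    lmarginal_erase _ (measurable_mul_prod_sub_parent hF₀ hF) (mem_univ j)]
  have hinner := lmarginal_mul_prod_sub_parent μ hrank hF₀ hF (univ.erase j) (notMem_erase j _)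
    (fun i hij _ => mem_erase.2 ⟨hij, mem_univ i⟩)
  conv_lhs => enter [2, x]; rw [hinner]
  simp only [Function.update_self, sdiff_self, bot_eq_empty,
    prod_empty, mul_one, card_erase_of_mem (mem_univ j), card_univ]
  exact lintegral_mul_const _ hF₀

end TreeIntegral

section Radial

variable {E : Type*} [NormedAddCommGroup E] [NormedSpace ℝ E] [FiniteDimensional ℝ E]
  [MeasurableSpace E] [BorelSpace E] (μ : Measure E) [μ.IsAddHaarMeasure]

theorem integrable_exp_neg_mul_norm_rpow {b p : ℝ} (hb : 0 < b) (hp : 0 < p) :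
    Integrable (fun x : E => Real.exp (-(b * ‖x‖ ^ p))) μ := by
  have hcont : Continuous fun x : E => Real.exp (-(b * ‖x‖ ^ p)) := by
    fun_prop (disch := exact hp.le)
  obtain hE | hE := subsingleton_or_nontrivial E
  · exact hcont.integrable_of_hasCompactSupport (HasCompactSupport.of_compactSpace _)
  rw [integrable_fun_norm_addHaar μ (f := fun t => Real.exp (-(b * t ^ p)))]
  refine (integrableOn_rpow_mul_exp_neg_mul_rpow (s := (Module.finrank ℝ E - 1 : ℕ))
    (neg_one_lt_zero.trans_le (Nat.cast_nonneg _)) hp hb).congr_fun (fun t _ => ?_)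
    measurableSet_Ioi
  simp [Real.rpow_natCast, neg_mul]

theorem integral_exp_neg_mul_norm_rpow {a p : ℝ} (ha : 0 < a) (hp : 0 < p) :
    ∫ x, Real.exp (-(a * ‖x‖ ^ p)) ∂μ
      = a ^ (-(Module.finrank ℝ E : ℝ) / p) * ∫ ξ, Real.exp (-‖ξ‖ ^ p) ∂μ := by
  set R : ℝ := a ^ p⁻¹
  have hR : 0 < R := Real.rpow_pos_of_pos ha _
  have hRp : ∀ x : E, ‖R • x‖ ^ p = a * ‖x‖ ^ p := fun x => by
    rw [norm_smul, Real.norm_of_nonneg hR.le, Real.mul_rpow hR.le (norm_nonneg x),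
      ← Real.rpow_mul ha.le, inv_mul_cancel₀ hp.ne', Real.rpow_one]
  have hRdim : (R ^ Module.finrank ℝ E)⁻¹ = a ^ (-(Module.finrank ℝ E : ℝ) / p) := by
    rw [← Real.rpow_natCast, ← Real.rpow_mul ha.le, ← Real.rpow_neg ha.le]
    ring_nf
  simpa only [hRp, hRdim, smul_eq_mul] using
    Measure.integral_comp_smul_of_nonneg μ (fun ξ => Real.exp (-‖ξ‖ ^ p)) R (hR := hR.le)

theorem lintegral_ofReal_exp_neg_mul_norm_rpow {a p : ℝ} (ha : 0 < a) (hp : 0 < p) :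
    ∫⁻ x, ENNReal.ofReal (Real.exp (-(a * ‖x‖ ^ p))) ∂μ
      = ENNReal.ofReal (a ^ (-(Module.finrank ℝ E : ℝ) / p) * ∫ ξ, Real.exp (-‖ξ‖ ^ p) ∂μ) := by
  rw [← ofReal_integral_eq_lintegral_ofReal (integrable_exp_neg_mul_norm_rpow μ ha hp)
    (.of_forall fun _ => (Real.exp_pos _).le), integral_exp_neg_mul_norm_rpow μ ha hp]

end Radial

namespace Lattice

variable {d : ℕ} {Λ : Finset (Fin d → ℤ)} {E : Type*} [SeminormedAddCommGroup E]

def nearestNeighbourGraph (Λ : Finset (Fin d → ℤ)) : SimpleGraph Λ :=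
  SimpleGraph.fromRel fun u v => ∑ k, |(u : Fin d → ℤ) k - (v : Fin d → ℤ) k| = 1

noncomputable def bondEnergy (p : ℝ) (X : Λ → E) (i : Λ) (k : Fin d) : ℝ :=
  if h : (i : Fin d → ℤ) + Pi.single k 1 ∈ Λ then
    ‖X ⟨(i : Fin d → ℤ) + Pi.single k 1, h⟩ - X i‖ ^ p
  else 0

theorem bondEnergy_nonneg (p : ℝ) (X : Λ → E) (i : Λ) (k : Fin d) :
    0 ≤ bondEnergy p X i k := by
  unfold bondEnergy
  split_ifs
  exacts [by positivity, le_rfl]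

theorem bondEnergy_of_eq_add_single {p : ℝ} {X : Λ → E} {u v : Λ} {k : Fin d}
    (h : (v : Fin d → ℤ) = (u : Fin d → ℤ) + Pi.single k 1) :
    bondEnergy p X u k = ‖X u - X v‖ ^ p := by
  have hv : (⟨(u : Fin d → ℤ) + Pi.single k 1, h ▸ v.2⟩ : Λ) = v := Subtype.ext h.symm
  rw [bondEnergy, dif_pos (h ▸ v.2), hv, norm_sub_rev]

theorem continuous_bondEnergy {p : ℝ} (hp : 0 ≤ p) (i : Λ) (k : Fin d) :
    Continuous fun X : Λ → E => bondEnergy p X i k := by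
  unfold bondEnergy
  split_ifs
  · exact (Real.continuous_rpow_const hp).comp (by fun_prop)
  · exact continuous_const

theorem continuous_sum_bondEnergy {p : ℝ} (hp : 0 ≤ p) :
    Continuous fun X : Λ → E => ∑ i, ∑ k, bondEnergy p X i k :=
  continuous_finsetSum _ fun i _ => continuous_finsetSum _ fun k _ => continuous_bondEnergy hp i k

theorem exists_bond_of_adj (p : ℝ) (X : Λ → E) {u v : Λ}
    (h : (nearestNeighbourGraph Λ).Adj u v) :
    ∃ q : Λ × Fin d, s((q.1 : Fin d → ℤ), (q.1 : Fin d → ℤ) + Pi.single q.2 1) =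
        s((u : Fin d → ℤ), v) ∧ bondEnergy p X q.1 q.2 = ‖X u - X v‖ ^ p := by
  have hsum : ∑ k, |(u : Fin d → ℤ) k - (v : Fin d → ℤ) k| = 1 := by
    rcases (SimpleGraph.fromRel_adj _ u v).1 h with ⟨-, h | h⟩
    · exact h
    · simpa only [abs_sub_comm] using h
  obtain ⟨k, hk | hk⟩ := exists_eq_add_single_of_sum_abs_sub_eq_one hsum
  · exact ⟨(u, k), by rw [hk], bondEnergy_of_eq_add_single hk⟩
  · refine ⟨(v, k), by rw [hk, Sym2.eq_swap], ?_⟩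
    rw [bondEnergy_of_eq_add_single hk, norm_sub_rev]

theorem sum_rpow_norm_sub_parent_le_sum_bondEnergy {j : Λ} {par : Λ → Λ} {rank : Λ → ℕ}
    (hadj : ∀ i ≠ j, (nearestNeighbourGraph Λ).Adj i (par i))
    (hrank : ∀ i ≠ j, rank (par i) < rank i) (p : ℝ) (X : Λ → E) :
    ∑ i ∈ univ.erase j, ‖X i - X (par i)‖ ^ p ≤ ∑ i, ∑ k, bondEnergy p X i k := by
  choose φ hφ hφE using fun i : {i // i ≠ j} => exists_bond_of_adj p X (hadj i i.2)
  have hinj : Function.Injective φ := fun i₁ i₂ h => Subtype.ext <|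
    eq_of_sym2_parent_eq hrank i₁.2 i₂.2 <| Sym2.map.injective Subtype.val_injective <| by
      simp only [Sym2.map_mk, ← hφ, h]
  calc ∑ i ∈ univ.erase j, ‖X i - X (par i)‖ ^ p
      = ∑ i : {i // i ≠ j}, ‖X i - X (par i)‖ ^ p := sum_subtype _ (by simp) _
    _ = ∑ i : {i // i ≠ j}, bondEnergy p X (φ i).1 (φ i).2 := by simp only [hφE]
    _ = ∑ q ∈ univ.map ⟨φ, hinj⟩, bondEnergy p X q.1 q.2 := by rw [sum_map]; rfl
    _ ≤ ∑ q : Λ × Fin d, bondEnergy p X q.1 q.2 :=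
        sum_le_univ_sum_of_nonneg fun q => bondEnergy_nonneg p X q.1 q.2
    _ = ∑ i, ∑ k, bondEnergy p X i k := Fintype.sum_prod_type _

theorem ofReal_exp_neg_mul_sum_bondEnergy_le {j : Λ} {par : Λ → Λ} {rank : Λ → ℕ}
    (hadj : ∀ i ≠ j, (nearestNeighbourGraph Λ).Adj i (par i))
    (hrank : ∀ i ≠ j, rank (par i) < rank i) {a : ℝ} (ha : 0 ≤ a) (p : ℝ) (X : Λ → E) :
    ENNReal.ofReal (Real.exp (-(a * ∑ i, ∑ k, bondEnergy p X i k)))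
      ≤ ∏ i ∈ univ.erase j, ENNReal.ofReal (Real.exp (-(a * ‖X i - X (par i)‖ ^ p))) := by
  rw [← ENNReal.ofReal_prod_of_nonneg fun _ _ => (Real.exp_pos _).le, ← Real.exp_sum,
    sum_neg_distrib, ← mul_sum]
  gcongr
  exact sum_rpow_norm_sub_parent_le_sum_bondEnergy hadj hrank p X

theorem ofReal_indicator_exp_neg_mul_sum_bondEnergy_le {j : Λ} {par : Λ → Λ} {rank : Λ → ℕ}
    (hadj : ∀ i ≠ j, (nearestNeighbourGraph Λ).Adj i (par i))
    (hrank : ∀ i ≠ j, rank (par i) < rank i) {a : ℝ} (ha : 0 ≤ a) (p : ℝ) (y : E) (X : Λ → E) :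
    ENNReal.ofReal ({X : Λ → E | ‖X j - y‖ < 1}.indicator
        (fun X => Real.exp (-(a * ∑ i, ∑ k, bondEnergy p X i k))) X)
      ≤ (Metric.ball y 1).indicator 1 (X j) *
          ∏ i ∈ univ.erase j, ENNReal.ofReal (Real.exp (-(a * ‖X i - X (par i)‖ ^ p))) := by
  by_cases hX : X ∈ {X : Λ → E | ‖X j - y‖ < 1}
  · rw [Set.indicator_of_mem hX, Set.indicator_of_mem (mem_ball_iff_norm.2 hX), Pi.one_apply,
      one_mul]
    exact ofReal_exp_neg_mul_sum_bondEnergy_le hadj hrank ha p X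
  · rw [Set.indicator_of_notMem hX, ENNReal.ofReal_zero]
    exact bot_le

end Lattice

open Lattice in
theorem stmt_3_general (d m : ℕ)
    (Λ : Finset (Fin d → ℤ))
    (hconn : (SimpleGraph.fromRel
      (fun u v : ↥Λ => ∑ k, |(u : Fin d → ℤ) k - (v : Fin d → ℤ) k| = 1)).Connected)
    (j : ↥Λ) (y : EuclideanSpace ℝ (Fin m)) (a p : ℝ) (ha : 0 < a) (hp : 0 < p) :
    ∫ X : ↥Λ → EuclideanSpace ℝ (Fin m),
      Set.indicator {X : ↥Λ → EuclideanSpace ℝ (Fin m) | ‖X j - y‖ < 1}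
        (fun X => Real.exp (-(a * ∑ i : ↥Λ, ∑ k : Fin d,
          (if h : ((i : Fin d → ℤ) + Pi.single k 1) ∈ Λ
            then ‖X ⟨(i : Fin d → ℤ) + Pi.single k 1, h⟩ - X i‖ ^ p else 0)))) X
    ≤ (volume (Metric.ball (0 : EuclideanSpace ℝ (Fin m)) 1)).toReal *
        (a ^ (-(m : ℝ) / p) *
          ∫ ξ : EuclideanSpace ℝ (Fin m), Real.exp (-‖ξ‖ ^ p)) ^ (Λ.card - 1) := by
  obtain ⟨par, rank, hpar⟩ := hconn.exists_parent_rank j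
  have hadj : ∀ i ≠ j, (nearestNeighbourGraph Λ).Adj i (par i) := fun i hi => (hpar i hi).1
  have hrank : ∀ i ≠ j, rank (par i) < rank i := fun i hi => (hpar i hi).2
  set F₀ : EuclideanSpace ℝ (Fin m) → ℝ≥0∞ := (Metric.ball y 1).indicator 1
  set F : EuclideanSpace ℝ (Fin m) → ℝ≥0∞ := fun ξ => ENNReal.ofReal (Real.exp (-(a * ‖ξ‖ ^ p)))
  have hF₀ : Measurable F₀ := measurable_const.indicator measurableSet_ball
  have hF : Measurable F := by fun_prop
  change ∫ X, Set.indicator {X : ↥Λ → EuclideanSpace ℝ (Fin m) | ‖X j - y‖ < 1}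
    (fun X => Real.exp (-(a * ∑ i, ∑ k, bondEnergy p X i k))) X ≤ _
  have hmeas : Measurable fun X : ↥Λ → EuclideanSpace ℝ (Fin m) =>
      Real.exp (-(a * ∑ i, ∑ k, bondEnergy p X i k)) :=
    (Real.continuous_exp.comp ((continuous_sum_bondEnergy hp.le).const_mul a).neg).measurable
  rw [integral_eq_lintegral_of_nonneg_ae
    (.of_forall fun X => Set.indicator_nonneg (fun _ _ => (Real.exp_pos _).le) X)
    (hmeas.indicator (measurableSet_lt (by fun_prop) measurable_const)).aestronglyMeasurable]
  refine ENNReal.toReal_le_of_le_ofReal (by positivity) ?_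
  calc _ ≤ ∫⁻ X : ↥Λ → _, F₀ (X j) * ∏ i ∈ univ.erase j, F (X i - X (par i)) :=
        lintegral_mono fun X =>
          ofReal_indicator_exp_neg_mul_sum_bondEnergy_le hadj hrank ha.le p y X
    _ = (∫⁻ x, F₀ x) * (∫⁻ x, F x) ^ (Λ.card - 1) := by
        rw [volume_pi, lintegral_mul_prod_sub_parent volume hrank hF₀ hF, Fintype.card_coe]
    _ = _ := by
        rw [lintegral_indicator_one measurableSet_ball, Measure.addHaar_ball_center,
          lintegral_ofReal_exp_neg_mul_norm_rpow volume ha hp, finrank_euclideanSpace_fin,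
          ENNReal.ofReal_mul ENNReal.toReal_nonneg, ENNReal.ofReal_toReal measure_ball_lt_top.ne,
          ENNReal.ofReal_pow (by positivity)]

/-- Tree-integration bound on a connected finite `Λ ⊆ ℤ^d` (Lemma A.1(a)):
the partition-function-type integral with the root variable `X(j)` clamped to the unit
ball around `y` is bounded by `ω(m) (a^{-m/p} c(p,m))^{|Λ|-1}`. -/
theorem stmt_3 (d m : ℕ) (hd : 0 < d) (hm : 0 < m)
    (Λ : Finset (Fin d → ℤ))
    (hconn : (SimpleGraph.fromRel
      (fun u v : ↥Λ => ∑ k, |(u : Fin d → ℤ) k - (v : Fin d → ℤ) k| = 1)).Connected)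
    (j : ↥Λ) (y : EuclideanSpace ℝ (Fin m)) (a p : ℝ) (ha : 0 < a) (hp : 0 < p) :
    ∫ X : ↥Λ → EuclideanSpace ℝ (Fin m),
      Set.indicator {X : ↥Λ → EuclideanSpace ℝ (Fin m) | ‖X j - y‖ < 1}
        (fun X => Real.exp (-(a * ∑ i : ↥Λ, ∑ k : Fin d,
          (if h : ((i : Fin d → ℤ) + Pi.single k 1) ∈ Λ
            then ‖X ⟨(i : Fin d → ℤ) + Pi.single k 1, h⟩ - X i‖ ^ p else 0)))) X
    ≤ (volume (Metric.ball (0 : EuclideanSpace ℝ (Fin m)) 1)).toReal *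
        (a ^ (-(m : ℝ) / p) *
          ∫ ξ : EuclideanSpace ℝ (Fin m), Real.exp (-‖ξ‖ ^ p)) ^ (Λ.card - 1) :=
  stmt_3_general d m Λ hconn j y a p ha hp
end

section
/- Let T be a finite tree with vertex set V and root j, let y ∈ ℝ^m, a > 0, p > 0. Then ∫_{(ℝ^m)^V} 1{|X(j)−y| < 1} · exp(−a Σ_{(u,v)∈E(T)} |X(u) − X(v)|^p) Π_{v∈V} dX(v) ≤ ω(m) (a^{−m/p} c(p,m))^{|V|−1}, where ω(m) is the volume of the unit m-ball and c(p,m) = ∫_{ℝ^m} e^{−|ξ|^p} dξ. -/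
open scoped BigOperators ENNReal
open MeasureTheory Function

section Aux
variable (m : ℕ)

lemma integ_g {p : ℝ} (hp : 0 < p) :
    Integrable (fun x : EuclideanSpace ℝ (Fin m) => Real.exp (-‖x‖ ^ p)) := by
  by_contra h
  have h2 := MeasureTheory.measure_unitBall_eq_integral_div_gamma
    (volume : Measure (EuclideanSpace ℝ (Fin m))) hp
  rw [integral_undef h] at h2
  simp only [zero_div, ENNReal.ofReal_zero] at h2
  exact absurd h2 (Metric.measure_ball_pos volume 0 one_pos).ne'

lemma smul_norm_rpow {a p : ℝ} (ha : 0 < a) (hp : 0 < p) (x : EuclideanSpace ℝ (Fin m)) :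
    Real.exp (-(a * ‖x‖ ^ p)) = Real.exp (-‖(a ^ (1/p)) • x‖ ^ p) := by
  have hR : (0:ℝ) < a ^ (1/p) := Real.rpow_pos_of_pos ha _
  congr 1
  rw [norm_smul, Real.norm_eq_abs, abs_of_pos hR,
    Real.mul_rpow hR.le (norm_nonneg _), ← Real.rpow_mul ha.le,
    one_div_mul_cancel hp.ne', Real.rpow_one]

lemma integral_scaled {a p : ℝ} (ha : 0 < a) (hp : 0 < p) :
    ∫ x : EuclideanSpace ℝ (Fin m), Real.exp (-(a * ‖x‖ ^ p)) =
      a ^ (-(m : ℝ) / p) * ∫ ξ : EuclideanSpace ℝ (Fin m), Real.exp (-‖ξ‖ ^ p) := by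
  have hR : (0:ℝ) < a ^ (1/p) := Real.rpow_pos_of_pos ha _
  calc ∫ x : EuclideanSpace ℝ (Fin m), Real.exp (-(a * ‖x‖ ^ p))
      = ∫ x : EuclideanSpace ℝ (Fin m),
          (fun y : EuclideanSpace ℝ (Fin m) => Real.exp (-‖y‖ ^ p)) ((a ^ (1/p)) • x) := by
        simp_rw [smul_norm_rpow m ha hp]
    _ = |((a ^ (1/p)) ^ Module.finrank ℝ (EuclideanSpace ℝ (Fin m)))⁻¹| •
          ∫ y : EuclideanSpace ℝ (Fin m), Real.exp (-‖y‖ ^ p) :=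
        MeasureTheory.Measure.integral_comp_smul volume (fun y : EuclideanSpace ℝ (Fin m) => Real.exp (-‖y‖ ^ p)) (a ^ (1/p))
    _ = a ^ (-(m : ℝ) / p) * ∫ ξ : EuclideanSpace ℝ (Fin m), Real.exp (-‖ξ‖ ^ p) := by
        rw [smul_eq_mul]
        congr 1
        rw [finrank_euclideanSpace_fin, ← Real.rpow_natCast (a ^ (1/p)) m,
          ← Real.rpow_mul ha.le, abs_of_pos (by positivity),
          ← Real.rpow_neg ha.le]
        congr 1
        field_simp

lemma lintegral_one_var {a p : ℝ} (ha : 0 < a) (hp : 0 < p) (c : EuclideanSpace ℝ (Fin m)) :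
    ∫⁻ x : EuclideanSpace ℝ (Fin m), ENNReal.ofReal (Real.exp (-(a * ‖x - c‖ ^ p))) =
    ENNReal.ofReal (a ^ (-(m:ℝ)/p) * ∫ ξ : EuclideanSpace ℝ (Fin m), Real.exp (-‖ξ‖ ^ p)) := by
  have hR : (0:ℝ) < a ^ (1/p) := Real.rpow_pos_of_pos ha _
  have hint : Integrable (fun x : EuclideanSpace ℝ (Fin m) => Real.exp (-(a * ‖x‖ ^ p))) := by
    have := (integrable_comp_smul_iff (volume : Measure (EuclideanSpace ℝ (Fin m)))
      (fun y : EuclideanSpace ℝ (Fin m) => Real.exp (-‖y‖ ^ p)) hR.ne').mpr (integ_g m hp)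
    simpa [← one_div, ← smul_norm_rpow m ha hp] using this
  have hint2 : Integrable (fun x : EuclideanSpace ℝ (Fin m) => Real.exp (-(a * ‖x - c‖ ^ p))) :=
    hint.comp_sub_right c
  rw [← ofReal_integral_eq_lintegral_ofReal hint2
    (Filter.Eventually.of_forall fun x => (Real.exp_pos _).le)]
  congr 1
  rw [show (fun x : EuclideanSpace ℝ (Fin m) => Real.exp (-(a * ‖x - c‖ ^ p)))
      = fun x : EuclideanSpace ℝ (Fin m) =>
        (fun z : EuclideanSpace ℝ (Fin m) => Real.exp (-(a * ‖z‖ ^ p))) (x - c) from rfl,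
    integral_sub_right_eq_self (μ := volume)
      (fun z : EuclideanSpace ℝ (Fin m) => Real.exp (-(a * ‖z‖ ^ p))) c,
    integral_scaled m ha hp]

end Aux

section Core
variable (m : ℕ) {V : Type} [Fintype V] [DecidableEq V]

lemma lmarginal_const_mul' (t : Finset V)
    (g h : (V → EuclideanSpace ℝ (Fin m)) → ℝ≥0∞)
    (hg : ∀ z y, g (Function.updateFinset z t y) = g z) (hg' : ∀ z, g z ≠ ∞)
    (z : V → EuclideanSpace ℝ (Fin m)) :
    MeasureTheory.lmarginal (fun _ => (volume : Measure (EuclideanSpace ℝ (Fin m)))) t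
      (fun X => g X * h X) z
    = g z * MeasureTheory.lmarginal (fun _ => (volume : Measure (EuclideanSpace ℝ (Fin m)))) t h z := by
  rw [MeasureTheory.lmarginal, MeasureTheory.lmarginal]
  simp_rw [hg]
  exact lintegral_const_mul' _ _ (hg' z)

lemma meas_aux (j : V) (y : EuclideanSpace ℝ (Fin m)) (a : ℝ) {p : ℝ} (hp : 0 < p) (par : V → V) (s : Finset V) :
    Measurable (fun X : V → EuclideanSpace ℝ (Fin m) =>
      Set.indicator (Metric.ball y 1) (fun _ => (1:ℝ≥0∞)) (X j) *
      ∏ v ∈ s, ENNReal.ofReal (Real.exp (-(a * ‖X v - X (par v)‖ ^ p)))) := by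
  apply Measurable.mul
  · exact (measurable_const.indicator measurableSet_ball).comp (measurable_pi_apply j)
  · apply Finset.measurable_prod
    intro v _
    apply ENNReal.measurable_ofReal.comp
    apply Real.measurable_exp.comp
    apply Measurable.neg
    apply Measurable.const_mul
    exact (Real.continuous_rpow_const hp.le).measurable.comp
      ((measurable_pi_apply v).sub (measurable_pi_apply (par v))).norm

lemma core (par : V → V) (d : V → ℕ) {a p : ℝ} (ha : 0 < a) (hp : 0 < p)
    (j : V) (y : EuclideanSpace ℝ (Fin m)) :
    ∀ (n : ℕ) (s : Finset V), s.card = n → j ∉ s → (∀ v ∈ s, d (par v) < d v) →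
    ∀ x : V → EuclideanSpace ℝ (Fin m),
    MeasureTheory.lmarginal (fun _ => (volume : Measure (EuclideanSpace ℝ (Fin m)))) s
      (fun X => Set.indicator (Metric.ball y 1) (fun _ => (1:ℝ≥0∞)) (X j) *
        ∏ v ∈ s, ENNReal.ofReal (Real.exp (-(a * ‖X v - X (par v)‖ ^ p)))) x
    ≤ Set.indicator (Metric.ball y 1) (fun _ => (1:ℝ≥0∞)) (x j) *
      (ENNReal.ofReal (a ^ (-(m:ℝ)/p) *
        ∫ ξ : EuclideanSpace ℝ (Fin m), Real.exp (-‖ξ‖ ^ p))) ^ n := by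
  intro n
  induction n with
  | zero =>
    intro s hs hj _ x
    rw [Finset.card_eq_zero.mp hs]
    simp
  | succ n IH =>
    intro s hs hj hd x
    set K : ℝ≥0∞ := ENNReal.ofReal (a ^ (-(m:ℝ)/p) *
      ∫ ξ : EuclideanSpace ℝ (Fin m), Real.exp (-‖ξ‖ ^ p)) with hK
    have hne : s.Nonempty := Finset.card_pos.mp (by omega)
    obtain ⟨ℓ, hℓs, hmin⟩ := Finset.exists_min_image s d hne
    have hℓd := hd ℓ hℓs
    have hparℓ : par ℓ ∉ s := fun h => absurd (hmin _ h) (not_le.mpr hℓd)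
    have hℓj : ℓ ≠ j := fun h => hj (h ▸ hℓs)
    have hparℓℓ : par ℓ ≠ ℓ := fun h => absurd hℓd (by rw [h]; exact lt_irrefl _)
    have hmeas := meas_aux m j y a hp par s
    -- indicator bound
    have hind_le : ∀ z : EuclideanSpace ℝ (Fin m),
        Set.indicator (Metric.ball y 1) (fun _ => (1:ℝ≥0∞)) z ≤ 1 :=
      fun z => by by_cases h : z ∈ Metric.ball y 1 <;> simp [h]
    have hCne : Set.indicator (Metric.ball y 1) (fun _ => (1:ℝ≥0∞)) (x j) * K ^ n ≠ ∞ :=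
      ENNReal.mul_ne_top (lt_of_le_of_lt (hind_le _) ENNReal.one_lt_top).ne
        (ENNReal.pow_ne_top ENNReal.ofReal_ne_top)
    -- split off factor ℓ
    have hfeq : (fun X : V → EuclideanSpace ℝ (Fin m) =>
        Set.indicator (Metric.ball y 1) (fun _ => (1:ℝ≥0∞)) (X j) *
          ∏ v ∈ s, ENNReal.ofReal (Real.exp (-(a * ‖X v - X (par v)‖ ^ p))))
      = fun X => ENNReal.ofReal (Real.exp (-(a * ‖X ℓ - X (par ℓ)‖ ^ p))) *
          (Set.indicator (Metric.ball y 1) (fun _ => (1:ℝ≥0∞)) (X j) *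
            ∏ v ∈ s.erase ℓ, ENNReal.ofReal (Real.exp (-(a * ‖X v - X (par v)‖ ^ p)))) := by
      funext X
      rw [← Finset.mul_prod_erase s _ hℓs]
      ring
    have hupd : ∀ (z : V → EuclideanSpace ℝ (Fin m)) (yy),
        (fun X : V → EuclideanSpace ℝ (Fin m) =>
          ENNReal.ofReal (Real.exp (-(a * ‖X ℓ - X (par ℓ)‖ ^ p))))
          (Function.updateFinset z (s.erase ℓ) yy)
        = ENNReal.ofReal (Real.exp (-(a * ‖z ℓ - z (par ℓ)‖ ^ p))) := by
      intro z yy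
      have h1 : Function.updateFinset z (s.erase ℓ) yy ℓ = z ℓ := by
        rw [Function.updateFinset_def]
        exact dif_neg (Finset.notMem_erase ℓ s)
      have h2 : Function.updateFinset z (s.erase ℓ) yy (par ℓ) = z (par ℓ) := by
        rw [Function.updateFinset_def]
        exact dif_neg fun h => hparℓ (Finset.erase_subset _ _ h)
      simp only [h1, h2]
    have inner_eq : ∀ z : V → EuclideanSpace ℝ (Fin m),
        MeasureTheory.lmarginal (fun _ => (volume : Measure (EuclideanSpace ℝ (Fin m))))
          (s.erase ℓ)
          (fun X => Set.indicator (Metric.ball y 1) (fun _ => (1:ℝ≥0∞)) (X j) *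
            ∏ v ∈ s, ENNReal.ofReal (Real.exp (-(a * ‖X v - X (par v)‖ ^ p)))) z
        = ENNReal.ofReal (Real.exp (-(a * ‖z ℓ - z (par ℓ)‖ ^ p))) *
          MeasureTheory.lmarginal (fun _ => (volume : Measure (EuclideanSpace ℝ (Fin m))))
            (s.erase ℓ)
            (fun X => Set.indicator (Metric.ball y 1) (fun _ => (1:ℝ≥0∞)) (X j) *
              ∏ v ∈ s.erase ℓ, ENNReal.ofReal (Real.exp (-(a * ‖X v - X (par v)‖ ^ p)))) z := by
      intro z
      rw [hfeq]
      exact lmarginal_const_mul' m (s.erase ℓ) _ _ (hupd) (fun _ => ENNReal.ofReal_ne_top) z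
    rw [MeasureTheory.lmarginal_erase _ hmeas hℓs]
    calc ∫⁻ xℓ, (MeasureTheory.lmarginal (fun _ => (volume : Measure (EuclideanSpace ℝ (Fin m))))
            (s.erase ℓ)
            (fun X => Set.indicator (Metric.ball y 1) (fun _ => (1:ℝ≥0∞)) (X j) *
              ∏ v ∈ s, ENNReal.ofReal (Real.exp (-(a * ‖X v - X (par v)‖ ^ p)))))
            (Function.update x ℓ xℓ)
        ≤ ∫⁻ xℓ, ENNReal.ofReal (Real.exp (-(a * ‖xℓ - x (par ℓ)‖ ^ p))) *
            (Set.indicator (Metric.ball y 1) (fun _ => (1:ℝ≥0∞)) (x j) * K ^ n) := by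
          apply lintegral_mono
          intro xℓ
          dsimp only
          rw [inner_eq]
          have hupdℓ : Function.update x ℓ xℓ ℓ = xℓ := Function.update_self ℓ xℓ x
          have hupdp : Function.update x ℓ xℓ (par ℓ) = x (par ℓ) :=
            Function.update_of_ne hparℓℓ xℓ x
          rw [hupdℓ, hupdp]
          apply mul_le_mul_right
          have := IH (s.erase ℓ) (by rw [Finset.card_erase_of_mem hℓs, hs]; rfl)
            (fun h => hj (Finset.erase_subset _ _ h))
            (fun v hv => hd v (Finset.erase_subset _ _ hv)) (Function.update x ℓ xℓ)
          rwa [Function.update_of_ne (Ne.symm hℓj)] at this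
      _ = Set.indicator (Metric.ball y 1) (fun _ => (1:ℝ≥0∞)) (x j) * K ^ (n+1) := by
          rw [lintegral_mul_const' _ _ hCne, lintegral_one_var m ha hp (x (par ℓ)), ← hK]
          ring
end Core

open scoped BigOperators
open MeasureTheory

/-- Core tree-integration estimate (Lemma A.1(a)): for a finite tree `T` with root `j`,
the integral over all configurations `X : V → ℝ^m` with the root variable clamped to a
unit ball, of `exp(-a Σ_{edges} ‖X(u)-X(v)‖^p)`, is at most
`ω(m) (a^{-m/p} c(p,m))^{|V|-1}`. -/
theorem stmt_4 (m : ℕ) (hm : 0 < m) (V : Type) [Fintype V] [DecidableEq V]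
    (G : SimpleGraph V) [DecidableRel G.Adj] (hG : G.IsTree)
    (j : V) (y : EuclideanSpace ℝ (Fin m)) (a p : ℝ) (ha : 0 < a) (hp : 0 < p) :
    ∫ X : V → EuclideanSpace ℝ (Fin m),
      Set.indicator {X : V → EuclideanSpace ℝ (Fin m) | ‖X j - y‖ < 1}
        (fun X => Real.exp (-(a * ∑ e ∈ G.edgeFinset,
          Sym2.lift ⟨fun u v => ‖X u - X v‖ ^ p,
            fun u v => by simp [norm_sub_rev (X u)]⟩ e))) X
    ≤ (volume (Metric.ball (0 : EuclideanSpace ℝ (Fin m)) 1)).toReal *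
        (a ^ (-(m : ℝ) / p) *
          ∫ ξ : EuclideanSpace ℝ (Fin m), Real.exp (-‖ξ‖ ^ p)) ^ (Fintype.card V - 1) := by
  classical
  have hconn : G.Connected := hG.isConnected
  -- a parent map decreasing the distance to the root
  have key : ∀ v : V, v ≠ j → ∃ u, G.Adj v u ∧ G.dist j u < G.dist j v := by
    intro v hv
    obtain ⟨w, hw⟩ := hconn.exists_walk_length_eq_dist v j
    cases w with
    | nil => exact absurd rfl hv
    | @cons _ u _ h q =>
      refine ⟨u, h, ?_⟩
      have h1 : G.dist j u ≤ q.length := by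
        rw [SimpleGraph.dist_comm]; exact SimpleGraph.dist_le q
      have h2 : q.length + 1 = G.dist v j := by simpa using hw
      have h3 : G.dist j v = G.dist v j := SimpleGraph.dist_comm
      omega
  set par : V → V := fun v => if h : v = j then j else Classical.choose (key v h) with hpar
  have hpar_adj : ∀ v, v ≠ j → G.Adj v (par v) := by
    intro v hv
    simp only [hpar, dif_neg hv]
    exact (Classical.choose_spec (key v hv)).1
  have hpar_d : ∀ v, v ≠ j → G.dist j (par v) < G.dist j v := by
    intro v hv
    simp only [hpar, dif_neg hv]
    exact (Classical.choose_spec (key v hv)).2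
  set S : Set (V → EuclideanSpace ℝ (Fin m)) :=
    {X : V → EuclideanSpace ℝ (Fin m) | ‖X j - y‖ < 1} with hSdef
  have hS : MeasurableSet S := by
    have : S = (fun X : V → EuclideanSpace ℝ (Fin m) => X j) ⁻¹' Metric.ball y 1 := by
      ext X; simp [hSdef, Metric.mem_ball, dist_eq_norm]
    rw [this]
    exact (measurable_pi_apply j) measurableSet_ball
  set g : (V → EuclideanSpace ℝ (Fin m)) → ℝ := fun X => Real.exp (-(a * ∑ e ∈ G.edgeFinset,
      Sym2.lift ⟨fun u v => ‖X u - X v‖ ^ p,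
        fun u v => by simp [norm_sub_rev (X u)]⟩ e)) with hgdef
  have hWmeas : ∀ e : Sym2 V, Measurable fun X : V → EuclideanSpace ℝ (Fin m) =>
      Sym2.lift ⟨fun u v => ‖X u - X v‖ ^ p,
        fun u v => by simp [norm_sub_rev (X u)]⟩ e := by
    intro e
    induction e using Sym2.ind with
    | _ u v =>
      simp only [Sym2.lift_mk]
      exact (Real.continuous_rpow_const hp.le).measurable.comp
        ((measurable_pi_apply u).sub (measurable_pi_apply v)).norm
  have hgm : Measurable g :=
    Real.measurable_exp.comp ((Finset.measurable_sum _ fun e _ => hWmeas e).const_mul a).neg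
  have hWnn : ∀ (X : V → EuclideanSpace ℝ (Fin m)) (e : Sym2 V),
      0 ≤ Sym2.lift ⟨fun u v => ‖X u - X v‖ ^ p,
        fun u v => by simp [norm_sub_rev (X u)]⟩ e := by
    intro X e
    induction e using Sym2.ind with
    | _ u v =>
      simp only [Sym2.lift_mk]
      exact Real.rpow_nonneg (norm_nonneg _) p
  -- the sum over the edges dominates the sum over (vertex, parent) pairs
  have hsum : ∀ X : V → EuclideanSpace ℝ (Fin m),
      ∑ v ∈ Finset.univ.erase j, ‖X v - X (par v)‖ ^ p ≤
      ∑ e ∈ G.edgeFinset, Sym2.lift ⟨fun u v => ‖X u - X v‖ ^ p,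
        fun u v => by simp [norm_sub_rev (X u)]⟩ e := by
    intro X
    have hinj : ∀ u ∈ Finset.univ.erase j, ∀ v ∈ Finset.univ.erase j,
        s(u, par u) = s(v, par v) → u = v := by
      intro u hu v hv h
      rw [Sym2.eq_iff] at h
      rcases h with ⟨h1, _⟩ | ⟨h1, h2⟩
      · exact h1
      · exfalso
        have du := hpar_d u (Finset.ne_of_mem_erase hu)
        have dv := hpar_d v (Finset.ne_of_mem_erase hv)
        rw [h2] at du; rw [h1] at du; omega
    have hsub : (Finset.univ.erase j).image (fun v => s(v, par v)) ⊆ G.edgeFinset := by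
      intro e he
      obtain ⟨v, hv, rfl⟩ := Finset.mem_image.mp he
      exact SimpleGraph.mem_edgeFinset.mpr (hpar_adj v (Finset.ne_of_mem_erase hv))
    calc ∑ v ∈ Finset.univ.erase j, ‖X v - X (par v)‖ ^ p
        = ∑ v ∈ Finset.univ.erase j, Sym2.lift ⟨fun u v => ‖X u - X v‖ ^ p,
            fun u v => by simp [norm_sub_rev (X u)]⟩ (s(v, par v)) := by
          refine Finset.sum_congr rfl fun v _ => ?_
          rw [Sym2.lift_mk]
      _ = ∑ e ∈ (Finset.univ.erase j).image (fun v => s(v, par v)),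
            Sym2.lift ⟨fun u v => ‖X u - X v‖ ^ p,
              fun u v => by simp [norm_sub_rev (X u)]⟩ e := (Finset.sum_image hinj).symm
      _ ≤ _ := Finset.sum_le_sum_of_subset_of_nonneg hsub fun e _ _ => hWnn X e
  -- pointwise bound by a product over (vertex, parent) pairs
  have hpt : ∀ X : V → EuclideanSpace ℝ (Fin m), ENNReal.ofReal (Set.indicator S g X) ≤
      Set.indicator (Metric.ball y 1) (fun _ => (1:ℝ≥0∞)) (X j) *
        ∏ v ∈ Finset.univ.erase j,
          ENNReal.ofReal (Real.exp (-(a * ‖X v - X (par v)‖ ^ p))) := by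
    intro X
    by_cases hX : X ∈ S
    · rw [Set.indicator_of_mem hX]
      have hXj : X j ∈ Metric.ball y 1 := by
        rw [Metric.mem_ball, dist_eq_norm]; exact hX
      rw [Set.indicator_of_mem hXj, one_mul]
      have h1 : g X ≤ Real.exp (-(a * ∑ v ∈ Finset.univ.erase j, ‖X v - X (par v)‖ ^ p)) :=
        Real.exp_le_exp.mpr (neg_le_neg (mul_le_mul_of_nonneg_left (hsum X) ha.le))
      have h2 : Real.exp (-(a * ∑ v ∈ Finset.univ.erase j, ‖X v - X (par v)‖ ^ p)) =
          ∏ v ∈ Finset.univ.erase j, Real.exp (-(a * ‖X v - X (par v)‖ ^ p)) := by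
        rw [Finset.mul_sum, ← Finset.sum_neg_distrib, Real.exp_sum]
      calc ENNReal.ofReal (g X)
          ≤ ENNReal.ofReal (∏ v ∈ Finset.univ.erase j,
              Real.exp (-(a * ‖X v - X (par v)‖ ^ p))) :=
            ENNReal.ofReal_le_ofReal (h1.trans_eq h2)
        _ = _ := ENNReal.ofReal_prod_of_nonneg fun v _ => (Real.exp_pos _).le
    · rw [Set.indicator_of_notMem hX]
      simp
  -- convert the Bochner integral into a lower Lebesgue integral
  rw [MeasureTheory.integral_eq_lintegral_of_nonneg_ae
    (Filter.Eventually.of_forall fun X =>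
      Set.indicator_nonneg (fun Y _ => (Real.exp_pos _).le) X)
    (hgm.indicator hS).aestronglyMeasurable]
  set K : ℝ≥0∞ := ENNReal.ofReal (a ^ (-(m:ℝ)/p) *
    ∫ ξ : EuclideanSpace ℝ (Fin m), Real.exp (-‖ξ‖ ^ p)) with hK
  have hmeasF := meas_aux m j y a hp par (Finset.univ.erase j)
  have hcard : (Finset.univ.erase j).card = Fintype.card V - 1 := by
    rw [Finset.card_erase_of_mem (Finset.mem_univ j), Finset.card_univ]
  have hlin : ∫⁻ X : V → EuclideanSpace ℝ (Fin m), ENNReal.ofReal (Set.indicator S g X) ≤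
      volume (Metric.ball (0 : EuclideanSpace ℝ (Fin m)) 1) * K ^ (Fintype.card V - 1) := by
    calc ∫⁻ X : V → EuclideanSpace ℝ (Fin m), ENNReal.ofReal (Set.indicator S g X)
        ≤ ∫⁻ X : V → EuclideanSpace ℝ (Fin m),
            Set.indicator (Metric.ball y 1) (fun _ => (1:ℝ≥0∞)) (X j) *
            ∏ v ∈ Finset.univ.erase j,
              ENNReal.ofReal (Real.exp (-(a * ‖X v - X (par v)‖ ^ p))) :=
          lintegral_mono hpt
      _ = MeasureTheory.lmarginal (fun _ => (volume : Measure (EuclideanSpace ℝ (Fin m))))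
            Finset.univ
            (fun X => Set.indicator (Metric.ball y 1) (fun _ => (1:ℝ≥0∞)) (X j) *
              ∏ v ∈ Finset.univ.erase j,
                ENNReal.ofReal (Real.exp (-(a * ‖X v - X (par v)‖ ^ p))))
            (fun _ => 0) := by
          rw [MeasureTheory.volume_pi]
          exact MeasureTheory.lintegral_eq_lmarginal_univ (fun _ => 0)
      _ = ∫⁻ xj : EuclideanSpace ℝ (Fin m),
            (MeasureTheory.lmarginal (fun _ => (volume : Measure (EuclideanSpace ℝ (Fin m))))
              (Finset.univ.erase j)
              (fun X => Set.indicator (Metric.ball y 1) (fun _ => (1:ℝ≥0∞)) (X j) *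
                ∏ v ∈ Finset.univ.erase j,
                  ENNReal.ofReal (Real.exp (-(a * ‖X v - X (par v)‖ ^ p)))))
              (Function.update (fun _ => 0) j xj) := by
          rw [MeasureTheory.lmarginal_erase _ hmeasF (Finset.mem_univ j)]
      _ ≤ ∫⁻ xj : EuclideanSpace ℝ (Fin m),
            Set.indicator (Metric.ball y 1) (fun _ => (1:ℝ≥0∞)) xj *
              K ^ (Fintype.card V - 1) := by
          apply lintegral_mono
          intro xj
          have := core m par (G.dist j) ha hp j y (Fintype.card V - 1)
            (Finset.univ.erase j) hcard (Finset.notMem_erase j Finset.univ)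
            (fun v hv => hpar_d v (Finset.ne_of_mem_erase hv))
            (Function.update (fun _ => 0) j xj)
          rwa [Function.update_self] at this
      _ = volume (Metric.ball y 1) * K ^ (Fintype.card V - 1) := by
          rw [lintegral_mul_const' _ _ (ENNReal.pow_ne_top ENNReal.ofReal_ne_top),
            lintegral_indicator measurableSet_ball, setLIntegral_one]
      _ = _ := by rw [MeasureTheory.Measure.addHaar_ball_center]
  have hKnn : 0 ≤ a ^ (-(m:ℝ)/p) * ∫ ξ : EuclideanSpace ℝ (Fin m), Real.exp (-‖ξ‖ ^ p) :=
    mul_nonneg (Real.rpow_nonneg ha.le _) (integral_nonneg fun ξ => (Real.exp_pos _).le)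
  have hfin : volume (Metric.ball (0 : EuclideanSpace ℝ (Fin m)) 1) *
      K ^ (Fintype.card V - 1) ≠ ∞ :=
    ENNReal.mul_ne_top measure_ball_lt_top.ne (ENNReal.pow_ne_top ENNReal.ofReal_ne_top)
  calc (∫⁻ X : V → EuclideanSpace ℝ (Fin m), ENNReal.ofReal (Set.indicator S g X)).toReal
      ≤ (volume (Metric.ball (0 : EuclideanSpace ℝ (Fin m)) 1) *
          K ^ (Fintype.card V - 1)).toReal := ENNReal.toReal_mono hfin hlin
    _ = _ := by
        rw [ENNReal.toReal_mul, ENNReal.toReal_pow, hK, ENNReal.toReal_ofReal hKnn]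
end

section
/- Let v ∈ W^{1,p}_0(ℝ^d, ℝ^m) with p > 1. For ρ > 0 and z ∈ Q(ρ) = [−ρ/2, ρ/2]^d, let L_{ρ,z} = (ρℤ)^d + z and for x ∈ L_{ρ,z}, y ∈ Q(1) define v_{x,ρ}(y) = (v(x+ρy) − ⨍_{x+Q(ρ)} v)/ρ − ∇v(x)·y. Then ⨍_{Q(ρ)} Σ_{x∈L_{ρ,z}} ρ^d (∫_{Q(1)} |∇v_{x,ρ}(y)|^p dy) dz = ∫_{ℝ^d} ∫_{Q(1)} |∇v(x+ρy) − ∇v(x)|^p dy dx, and this quantity tends to 0 as ρ → 0. -/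
open MeasureTheory Filter Metric Set Topology
open scoped ENNReal

/-!
Periodization: `Q(ρ)` is an a.e. fundamental domain of the lattice `ρℤ^d`, so averaging the
lattice sums over the shift `z ∈ Q(ρ)` reassembles the integral over `ℝ^d`.
For the limit, Fubini puts the `y`-integral outside. For fixed `y` the inner integral
`∫ ‖∇v(x + ρy) - ∇v(x)‖^p dx` tends to `0` by continuity of translation in `L^p` (approximate
`∇v` by a compactly supported continuous, hence uniformly continuous, function), and it is bounded
by `(2‖∇v‖_p)^p`; dominated convergence on the finite measure space `Q(1)` concludes.
-/

section Translation

variable {G E : Type*} [NormedAddCommGroup E] {q : ℝ≥0∞}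

theorem eLpNorm_comp_add_right_sub_le [AddGroup G] [MeasurableSpace G] [MeasurableAdd G]
    {μ : Measure G} [μ.IsAddRightInvariant] {f : G → E} (hf : AEStronglyMeasurable f μ)
    (hq : 1 ≤ q) (w : G) :
    eLpNorm (fun x => f (x + w) - f x) q μ ≤ 2 * eLpNorm f q μ := by
  have hτ := measurePreserving_add_right μ w
  calc eLpNorm (fun x => f (x + w) - f x) q μ
      ≤ eLpNorm (fun x => f (x + w)) q μ + eLpNorm f q μ :=
        eLpNorm_sub_le (hf.comp_measurePreserving hτ) hf hq
    _ = 2 * eLpNorm f q μ := by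
        rw [two_mul]; exact congrArg (· + _) (eLpNorm_comp_measurePreserving hf hτ)

variable [NormedAddCommGroup G] [MeasurableSpace G] [ProperSpace G] {μ : Measure G}

theorem HasCompactSupport.tendsto_eLpNorm_comp_add_right_sub [IsFiniteMeasureOnCompacts μ]
    {h : G → E} (hs : HasCompactSupport h) (hc : Continuous h) :
    Tendsto (fun w => eLpNorm (fun x => h (x + w) - h x) q μ) (𝓝 0) (𝓝 0) := by
  set K := cthickening 1 (tsupport h)
  have hK : μ K ≠ ∞ := hs.cthickening.measure_lt_top.ne
  set osc : G → ℝ≥0∞ := fun w => ⨆ x, ‖h (x + w) - h x‖ₑ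
  have hosc : Tendsto osc (𝓝 0) (𝓝 0) := by
    rw [ENNReal.tendsto_nhds_zero]
    intro ε hε
    obtain ⟨r, hr, hru⟩ :=
      EMetric.uniformContinuous_iff.1 (hs.uniformContinuous_of_continuous hc) ε hε
    filter_upwards [eball_mem_nhds 0 hr] with w hw
    refine iSup_le fun x => ?_
    rw [← edist_eq_enorm_sub]
    refine (hru ?_).le
    simpa [edist_eq_enorm_sub] using hw
  have hbound : ∀ᶠ w in 𝓝 (0 : G),
      eLpNorm (fun x => h (x + w) - h x) q μ ≤ osc w * μ K ^ q.toReal⁻¹ := by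
    filter_upwards [closedBall_mem_nhds (0 : G) one_pos] with w hw
    have hsupp : Function.support (fun x => h (x + w) - h x) ⊆ K := by
      intro x hx
      by_contra hxK
      have h0 : ∀ y, dist x y ≤ 1 → h y = 0 := fun y hy => image_eq_zero_of_notMem_tsupport
        fun hy' => hxK (mem_cthickening_of_dist_le x y 1 _ hy' hy)
      exact hx (by simp [h0 x (by simp), h0 (x + w) (by simpa [dist_eq_norm] using hw)])
    rw [← eLpNorm_restrict_eq_of_support_subset hsupp]
    calc eLpNorm (fun x => h (x + w) - h x) q (μ.restrict K)
        ≤ osc w • (μ.restrict K) univ ^ q.toReal⁻¹ :=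
          eLpNorm_le_of_ae_enorm_bound (ae_of_all _ fun x =>
            le_iSup (fun x => ‖h (x + w) - h x‖ₑ) x)
      _ = osc w * μ K ^ q.toReal⁻¹ := by rw [Measure.restrict_apply_univ, smul_eq_mul]
  have hlim : Tendsto (fun w => osc w * μ K ^ q.toReal⁻¹) (𝓝 0) (𝓝 0) := by
    simpa using ENNReal.Tendsto.mul_const hosc
      (Or.inr (ENNReal.rpow_ne_top_of_nonneg (by positivity) hK))
  exact tendsto_of_tendsto_of_tendsto_of_le_of_le' tendsto_const_nhds hlim
    (Eventually.of_forall fun _ => zero_le) hbound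

theorem MeasureTheory.MemLp.tendsto_eLpNorm_comp_add_right_sub [NormedSpace ℝ E] [BorelSpace G]
    [μ.IsAddRightInvariant] [μ.Regular] {g : G → E} (hg : MemLp g q μ)
    (hq1 : 1 ≤ q) (hq : q ≠ ∞) :
    Tendsto (fun w => eLpNorm (fun x => g (x + w) - g x) q μ) (𝓝 0) (𝓝 0) := by
  rw [ENNReal.tendsto_nhds_zero]
  intro ε hε
  have hε3 : 0 < ε / 3 := ENNReal.div_pos hε.ne' ENNReal.ofNat_ne_top
  obtain ⟨h, hs, hgh, hc, -⟩ := hg.exists_hasCompactSupport_eLpNorm_sub_le hq hε3.ne'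
  have hgh_m : AEStronglyMeasurable (g - h) μ := hg.1.sub hc.aestronglyMeasurable
  filter_upwards [ENNReal.tendsto_nhds_zero.1
    (hs.tendsto_eLpNorm_comp_add_right_sub (μ := μ) hc) _ hε3] with w hw
  have hτ := measurePreserving_add_right μ w
  have hsplit : (fun x => g (x + w) - g x)
      = (fun x => (g - h) (x + w) - (g - h) x) + (fun x => h (x + w) - h x) := by
    ext x; simp only [Pi.add_apply, Pi.sub_apply]; abel
  calc eLpNorm (fun x => g (x + w) - g x) q μ
      ≤ eLpNorm (fun x => (g - h) (x + w) - (g - h) x) q μ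
          + eLpNorm (fun x => h (x + w) - h x) q μ := by
        rw [hsplit]
        exact eLpNorm_add_le ((hgh_m.comp_measurePreserving hτ).sub hgh_m)
          ((hc.aestronglyMeasurable.comp_measurePreserving hτ).sub hc.aestronglyMeasurable) hq1
    _ ≤ 2 * (ε / 3) + ε / 3 :=
        add_le_add ((eLpNorm_comp_add_right_sub_le hgh_m hq1 w).trans (by gcongr)) hw
    _ = ε := by rw [two_mul, ENNReal.add_thirds]

end Translation

theorem integral_norm_rpow_eq_toReal_eLpNorm_rpow {α E : Type*} [MeasurableSpace α]
    [NormedAddCommGroup E] {μ : Measure α} {f : α → E} (hf : AEStronglyMeasurable f μ)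
    {p : ℝ} (hp : 0 < p) :
    ∫ x, ‖f x‖ ^ p ∂μ = (eLpNorm f (ENNReal.ofReal p) μ ^ p).toReal := by
  rw [← ENNReal.toReal_rpow, toReal_eLpNorm hf,
    lpNorm_eq_integral_norm_rpow_toReal (ENNReal.ofReal_pos.2 hp).ne' ENNReal.ofReal_ne_top hf,
    ENNReal.toReal_ofReal hp.le, ← Real.rpow_mul (integral_nonneg fun _ => by positivity),
    inv_mul_cancel₀ hp.ne', Real.rpow_one]

section Oscillation

variable {G E : Type*} [NormedAddCommGroup E] [NormedAddCommGroup G] [MeasurableSpace G]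
  {μ : Measure G} {p : ℝ} {g : G → E}

theorem integral_norm_comp_add_right_sub_rpow_le [BorelSpace G] [μ.IsAddRightInvariant]
    (hp : 1 ≤ p) (hg : MemLp g (ENNReal.ofReal p) μ) (w : G) :
    ∫ x, ‖g (x + w) - g x‖ ^ p ∂μ ≤ ((2 * eLpNorm g (ENNReal.ofReal p) μ) ^ p).toReal := by
  have hp0 : 0 < p := zero_lt_one.trans_le hp
  rw [integral_norm_rpow_eq_toReal_eLpNorm_rpow (f := fun x => g (x + w) - g x)
    ((hg.1.comp_measurePreserving (measurePreserving_add_right μ w)).sub hg.1) hp0]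
  refine ENNReal.toReal_mono (by finiteness [hg.2.ne]) (ENNReal.rpow_le_rpow ?_ hp0.le)
  exact eLpNorm_comp_add_right_sub_le hg.1 (ENNReal.one_le_ofReal.2 hp) w

theorem MeasureTheory.MemLp.tendsto_integral_norm_comp_add_right_sub_rpow [NormedSpace ℝ E]
    [ProperSpace G] [BorelSpace G] [μ.IsAddRightInvariant] [μ.Regular] (hp : 1 ≤ p)
    (hg : MemLp g (ENNReal.ofReal p) μ) :
    Tendsto (fun w => ∫ x, ‖g (x + w) - g x‖ ^ p ∂μ) (𝓝 0) (𝓝 0) := by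
  have hp0 : 0 < p := zero_lt_one.trans_le hp
  have hpow : Tendsto (fun t : ℝ≥0∞ => (t ^ p).toReal) (𝓝 0) (𝓝 0) := by
    have h := (ENNReal.continuous_rpow_const (y := p)).tendsto 0
    rw [ENNReal.zero_rpow_of_pos hp0] at h
    rw [← ENNReal.toReal_zero]
    exact (ENNReal.tendsto_toReal ENNReal.zero_ne_top).comp h
  refine (hpow.comp (hg.tendsto_eLpNorm_comp_add_right_sub
    (ENNReal.one_le_ofReal.2 hp) ENNReal.ofReal_ne_top)).congr fun w => ?_
  exact (integral_norm_rpow_eq_toReal_eLpNorm_rpow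
    ((hg.1.comp_measurePreserving (measurePreserving_add_right μ w)).sub hg.1) hp0).symm

variable [NormedSpace ℝ G] [BorelSpace G] [SecondCountableTopology G]

theorem MeasureTheory.StronglyMeasurable.norm_comp_add_smul_sub_rpow (hg : StronglyMeasurable g)
    (ρ p : ℝ) :
    StronglyMeasurable (fun q : G × G => ‖g (q.1 + ρ • q.2) - g q.1‖ ^ p) :=
  (((hg.comp_measurable (measurable_fst.add (measurable_snd.const_smul ρ))).sub
    (hg.comp_measurable measurable_fst)).norm.measurable.pow_const p).stronglyMeasurable

variable [SFinite μ] [μ.IsAddRightInvariant] {ν : Measure G} [IsFiniteMeasure ν]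

theorem integrable_norm_comp_add_smul_sub_rpow (hp : 1 ≤ p) (hgm : StronglyMeasurable g)
    (hg : MemLp g (ENNReal.ofReal p) μ) (ρ : ℝ) :
    Integrable (fun q : G × G => ‖g (q.1 + ρ • q.2) - g q.1‖ ^ p) (μ.prod ν) := by
  have hp0 : 0 < p := zero_lt_one.trans_le hp
  have hF := hgm.norm_comp_add_smul_sub_rpow ρ p
  refine (integrable_prod_iff' hF.aestronglyMeasurable).2 ⟨ae_of_all _ fun y => ?_, ?_⟩
  · simpa [ENNReal.toReal_ofReal hp0.le] using
      ((hg.comp_measurePreserving (measurePreserving_add_right μ (ρ • y))).sub hg)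
        |>.integrable_norm_rpow (ENNReal.ofReal_pos.2 hp0).ne' ENNReal.ofReal_ne_top
  · refine Integrable.mono' (integrable_const ((2 * eLpNorm g (ENNReal.ofReal p) μ) ^ p).toReal)
      hF.norm.integral_prod_left'.aestronglyMeasurable (ae_of_all _ fun y => ?_)
    simp only [Real.norm_eq_abs, abs_of_nonneg (Real.rpow_nonneg (norm_nonneg _) _)]
    rw [abs_of_nonneg (integral_nonneg fun _ => by positivity)]
    exact integral_norm_comp_add_right_sub_rpow_le hp hg (ρ • y)

theorem MeasureTheory.MemLp.tendsto_integral_integral_norm_comp_add_smul_sub_rpow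
    [NormedSpace ℝ E] [ProperSpace G] [μ.Regular] (hp : 1 ≤ p) (hgm : StronglyMeasurable g)
    (hg : MemLp g (ENNReal.ofReal p) μ) :
    Tendsto (fun ρ : ℝ => ∫ y, ∫ x, ‖g (x + ρ • y) - g x‖ ^ p ∂μ ∂ν) (𝓝 0) (𝓝 0) := by
  have hdom : ∀ ρ : ℝ, ∀ y, ‖∫ x, ‖g (x + ρ • y) - g x‖ ^ p ∂μ‖
      ≤ ((2 * eLpNorm g (ENNReal.ofReal p) μ) ^ p).toReal := fun ρ y => by
    rw [Real.norm_of_nonneg (integral_nonneg fun _ => by positivity)]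
    exact integral_norm_comp_add_right_sub_rpow_le hp hg (ρ • y)
  have hpoint : ∀ y : G, Tendsto (fun ρ : ℝ => ∫ x, ‖g (x + ρ • y) - g x‖ ^ p ∂μ) (𝓝 0) (𝓝 0) :=
    fun y => (hg.tendsto_integral_norm_comp_add_right_sub_rpow hp).comp
      (by simpa using (tendsto_id (x := 𝓝 (0 : ℝ))).smul_const y)
  simpa using tendsto_integral_filter_of_dominated_convergence (μ := ν) (l := 𝓝 (0 : ℝ))
    (f := fun _ => (0 : ℝ)) _
    (Eventually.of_forall fun ρ =>
      (hgm.norm_comp_add_smul_sub_rpow ρ p).integral_prod_left'.aestronglyMeasurable)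
    (Eventually.of_forall fun ρ => ae_of_all _ (hdom ρ)) (integrable_const _)
    (ae_of_all _ hpoint)

end Oscillation

section Lattice

variable {d : ℕ} {ρ : ℝ}

theorem cube_eq_closedBall {r : ℝ} (hr : 0 ≤ r) :
    {x : Fin d → ℝ | ∀ i, |x i| ≤ r} = closedBall 0 r := by
  ext x
  simp [pi_norm_le_iff_of_nonneg hr]

theorem iUnion_closedBall_lattice (hρ : 0 < ρ) :
    ⋃ n : Fin d → ℤ, closedBall (ρ • fun i => (n i : ℝ)) (ρ / 2) = univ := by
  refine eq_univ_of_forall fun x => mem_iUnion.2 ⟨fun i => round (x i / ρ), ?_⟩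
  rw [mem_closedBall, dist_pi_le_iff (by positivity)]
  intro i
  have hx : x i - ρ * round (x i / ρ) = ρ * (x i / ρ - round (x i / ρ)) := by field_simp
  rw [Real.dist_eq, Pi.smul_apply, smul_eq_mul, hx, abs_mul, abs_of_pos hρ]
  nlinarith [abs_sub_round (x i / ρ)]

theorem pairwise_aedisjoint_closedBall_lattice (hρ : 0 < ρ) :
    Pairwise (Function.onFun (AEDisjoint volume) fun n : Fin d → ℤ =>
      closedBall (ρ • fun i => (n i : ℝ)) (ρ / 2)) := by
  intro n m hnm
  obtain ⟨i, hi⟩ := Function.ne_iff.1 hnm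
  have hsep : ρ ≤ |ρ * n i - ρ * m i| := by
    have : (1 : ℝ) ≤ |((n i - m i : ℤ) : ℝ)| := by
      exact_mod_cast Int.one_le_abs (sub_ne_zero.2 hi)
    rw [← mul_sub, abs_mul, abs_of_pos hρ]
    push_cast at this
    nlinarith
  refine measure_mono_null (t := {x : Fin d → ℝ | x i = ρ * (n i + m i) / 2}) ?_
    (Measure.pi_hyperplane _ i _)
  rintro x ⟨hxn, hxm⟩
  rw [mem_closedBall, dist_pi_le_iff (by positivity)] at hxn hxm
  have h1 := abs_le.1 (hxn i)
  have h2 := abs_le.1 (hxm i)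
  simp only [Pi.smul_apply, smul_eq_mul] at h1 h2
  change x i = ρ * (n i + m i) / 2
  rcases le_abs.1 hsep with h | h <;> linarith

theorem lintegral_closedBall_tsum_comp_add_lattice (hρ : 0 < ρ) {f : (Fin d → ℝ) → ℝ≥0∞}
    (hf : AEMeasurable f) :
    ∫⁻ z in closedBall 0 (ρ / 2), ∑' n : Fin d → ℤ, f (z + ρ • fun i => (n i : ℝ))
      = ∫⁻ x, f x := by
  calc ∫⁻ z in closedBall 0 (ρ / 2), ∑' n : Fin d → ℤ, f (z + ρ • fun i => (n i : ℝ))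
      = ∑' n : Fin d → ℤ, ∫⁻ z in closedBall 0 (ρ / 2), f (z + ρ • fun i => (n i : ℝ)) :=
        lintegral_tsum fun n => (hf.comp_quasiMeasurePreserving
          (measurePreserving_add_right _ _).quasiMeasurePreserving).restrict
    _ = ∑' n : Fin d → ℤ, ∫⁻ x in closedBall (ρ • fun i => (n i : ℝ)) (ρ / 2), f x :=
        tsum_congr fun n => by
          have := (measurePreserving_add_right volume (ρ • fun i => (n i : ℝ)))
            |>.setLIntegral_comp_preimage_emb (measurableEmbedding_addRight _) f
              (closedBall (ρ • fun i => (n i : ℝ)) (ρ / 2))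
          rwa [preimage_add_right_closedBall, sub_self] at this
    _ = ∫⁻ x in ⋃ n : Fin d → ℤ, closedBall (ρ • fun i => (n i : ℝ)) (ρ / 2), f x :=
        (lintegral_iUnion₀ (fun _ => measurableSet_closedBall.nullMeasurableSet)
          (pairwise_aedisjoint_closedBall_lattice hρ) f).symm
    _ = ∫⁻ x, f x := by rw [iUnion_closedBall_lattice hρ, Measure.restrict_univ]

theorem integral_closedBall_tsum_comp_add_lattice (hρ : 0 < ρ) {f : (Fin d → ℝ) → ℝ}
    (hf0 : ∀ x, 0 ≤ f x) (hf : Integrable f) :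
    ∫ z in closedBall 0 (ρ / 2), ∑' n : Fin d → ℤ, f (z + ρ • fun i => (n i : ℝ))
      = ∫ x, f x := by
  have hfm : AEMeasurable (fun x => ENNReal.ofReal (f x)) := hf.1.aemeasurable.ennreal_ofReal
  have hsum : AEMeasurable
      (fun z => ∑' n : Fin d → ℤ, ENNReal.ofReal (f (z + ρ • fun i => (n i : ℝ))))
      (volume.restrict (closedBall 0 (ρ / 2))) :=
    AEMeasurable.tsum fun n => (hfm.comp_quasiMeasurePreserving
      (measurePreserving_add_right _ _).quasiMeasurePreserving).restrict
  have hfin := lintegral_closedBall_tsum_comp_add_lattice hρ hfm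
  calc ∫ z in closedBall 0 (ρ / 2), ∑' n : Fin d → ℤ, f (z + ρ • fun i => (n i : ℝ))
      = ∫ z in closedBall 0 (ρ / 2),
          (∑' n : Fin d → ℤ, ENNReal.ofReal (f (z + ρ • fun i => (n i : ℝ)))).toReal := by
        simp only [ENNReal.tsum_toReal_eq fun _ => ENNReal.ofReal_ne_top,
          ENNReal.toReal_ofReal (hf0 _)]
    _ = ∫ x, f x := by
        rw [integral_toReal hsum (ae_lt_top' hsum (hfin ▸ hf.lintegral_lt_top.ne)), hfin,
          integral_eq_lintegral_of_nonneg_ae (ae_of_all _ hf0) hf.1]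

end Lattice

theorem stmt_8_general (d m : ℕ) (p : ℝ) (hp : 1 < p)
    (v : (Fin d → ℝ) → (Fin m → ℝ))
    (hmem : MemLp (fun x => fderiv ℝ v x) (ENNReal.ofReal p) volume) :
    (∀ ρ : ℝ, 0 < ρ →
      (ρ ^ d)⁻¹ *
        ∫ z in {x : Fin d → ℝ | ∀ i, |x i| ≤ ρ / 2},
          ∑' n : Fin d → ℤ, ρ ^ d *
            ∫ y in {x : Fin d → ℝ | ∀ i, |x i| ≤ 1 / 2},
              ‖fderiv ℝ v ((z + ρ • fun i => (n i : ℝ)) + ρ • y) -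
                fderiv ℝ v (z + ρ • fun i => (n i : ℝ))‖ ^ p
      = ∫ x : Fin d → ℝ,
          ∫ y in {x : Fin d → ℝ | ∀ i, |x i| ≤ 1 / 2},
            ‖fderiv ℝ v (x + ρ • y) - fderiv ℝ v x‖ ^ p) ∧
    Tendsto (fun ρ : ℝ =>
        ∫ x : Fin d → ℝ,
          ∫ y in {x : Fin d → ℝ | ∀ i, |x i| ≤ 1 / 2},
            ‖fderiv ℝ v (x + ρ • y) - fderiv ℝ v x‖ ^ p)
      (nhdsWithin 0 (Set.Ioi 0)) (nhds 0) := by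
  have hgm : StronglyMeasurable (fderiv ℝ v) := (measurable_fderiv ℝ v).stronglyMeasurable
  have : IsFiniteMeasure (volume.restrict (closedBall (0 : Fin d → ℝ) (1 / 2))) :=
    isFiniteMeasure_restrict.2 measure_closedBall_lt_top.ne
  have hint := integrable_norm_comp_add_smul_sub_rpow
    (ν := volume.restrict (closedBall 0 (1 / 2))) hp.le hgm hmem
  simp only [cube_eq_closedBall (by norm_num : (0 : ℝ) ≤ 1 / 2)]
  refine ⟨fun ρ hρ => ?_, ?_⟩
  · rw [cube_eq_closedBall (by positivity), ← integral_closedBall_tsum_comp_add_lattice hρ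
      (fun x => integral_nonneg fun y => by positivity) (hint ρ).integral_prod_left]
    simp_rw [tsum_mul_left]
    rw [integral_const_mul, inv_mul_cancel_left₀ (by positivity)]
  · refine Tendsto.congr (fun ρ => (integral_integral_swap (hint ρ)).symm) ?_
    exact (hmem.tendsto_integral_integral_norm_comp_add_smul_sub_rpow hp.le hgm).mono_left
      nhdsWithin_le_nhds

/-- Blow-up lemma (Lemma 2.6(a)): for `v ∈ W^{1,p}_0` the averaged sum over the shifted
lattices `L_{ρ,z}` of the local gradient defects equals
`∫_{ℝ^d}∫_{Q(1)} |∇v(x+ρy)-∇v(x)|^p dy dx`, and this quantity tends to `0` as `ρ → 0⁺`. -/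
theorem stmt_8 (d m : ℕ) (hd : 0 < d) (p : ℝ) (hp : 1 < p)
    (v : (Fin d → ℝ) → (Fin m → ℝ))
    (hdiff : Differentiable ℝ v) (hsupp : HasCompactSupport v)
    (hmem : MemLp (fun x => fderiv ℝ v x) (ENNReal.ofReal p) volume) :
    (∀ ρ : ℝ, 0 < ρ →
      (ρ ^ d)⁻¹ *
        ∫ z in {x : Fin d → ℝ | ∀ i, |x i| ≤ ρ / 2},
          ∑' n : Fin d → ℤ, ρ ^ d *
            ∫ y in {x : Fin d → ℝ | ∀ i, |x i| ≤ 1 / 2},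
              ‖fderiv ℝ v ((z + ρ • fun i => (n i : ℝ)) + ρ • y) -
                fderiv ℝ v (z + ρ • fun i => (n i : ℝ))‖ ^ p
      = ∫ x : Fin d → ℝ,
          ∫ y in {x : Fin d → ℝ | ∀ i, |x i| ≤ 1 / 2},
            ‖fderiv ℝ v (x + ρ • y) - fderiv ℝ v x‖ ^ p) ∧
    Tendsto (fun ρ : ℝ =>
        ∫ x : Fin d → ℝ,
          ∫ y in {x : Fin d → ℝ | ∀ i, |x i| ≤ 1 / 2},
            ‖fderiv ℝ v (x + ρ • y) - fderiv ℝ v x‖ ^ p)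
      (nhdsWithin 0 (Set.Ioi 0)) (nhds 0) :=
  stmt_8_general d m p hp v hmem
end

section
/- Let Θ : ℤ^d → [0,1] be Lipschitz with |Θ(i) − Θ(j)| ≤ R₀/R whenever |i − j|_∞ ≤ R₀, and let X, Y, Z : Λ → ℝ^m with ‖X − Z‖_{ℓ^r(Λ)} ≤ κ|Λ|^{1/r+1/d} and ‖Y − Z‖_{ℓ^r(S)} ≤ κ|Λ|^{1/r+1/d} on a sublattice S. Then for any collection of translates τ_j(A) with diam A < R₀ contained in S', Σ_j Σ_{i∈τ_j(A)} |Θ(i) − Θ(j)|^r |X(i) − Y(i)|^r ≤ R₀^{d+r} R^{−r} (2κ)^r |Λ|^{1+r/d}, provided each lattice point lies in at most R₀^d of the sets τ_j(A). -/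
open scoped BigOperators

lemma aux_rpow_add_le {a b p : ℝ} (ha : 0 ≤ a) (hb : 0 ≤ b) (hp : 1 ≤ p) :
    (a + b) ^ p ≤ 2 ^ (p - 1) * (a ^ p + b ^ p) := by
  lift a to NNReal using ha
  lift b to NNReal using hb
  exact_mod_cast NNReal.rpow_add_le_mul_rpow_add_rpow a b hp

/-- Key cross-term estimate (A.14) of the Interpolation Lemma: a slowly varying cutoff `Θ`
(varying by at most `R₀/R` over distance `R₀`) converts the `ℓ^r`-closeness of `X` and `Y`
to a common reference `Z` into the bound
`Σ_j Σ_{i∈τ_j(A)} |Θ(i)-Θ(j)|^r |X(i)-Y(i)|^r ≤ R₀^{d+r} R^{-r} (2κ)^r |Λ|^{1+r/d}`,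
provided each lattice point lies in at most `R₀^d` of the translates `τ_j(A)`. -/
theorem stmt_18 (d m : ℕ) (hd : 0 < d) (r R R₀ κ : ℝ)
    (hr : 1 ≤ r) (hR : 0 < R) (hR₀ : 0 < R₀) (hκ : 0 < κ)
    (A J Λ : Finset (Fin d → ℤ)) (hA0 : (0 : Fin d → ℤ) ∈ A)
    (hAdiam : ∀ a ∈ A, ∀ k : Fin d, |(a k : ℝ)| ≤ R₀)
    (Θ : (Fin d → ℤ) → ℝ) (hΘ01 : ∀ i, Θ i ∈ Set.Icc (0 : ℝ) 1)
    (hΘlip : ∀ i j : Fin d → ℤ,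
      (∀ k, |((i k - j k : ℤ) : ℝ)| ≤ R₀) → |Θ i - Θ j| ≤ R₀ / R)
    (X Y Z : (Fin d → ℤ) → EuclideanSpace ℝ (Fin m))
    (hX : ∑ i ∈ Λ, ‖X i - Z i‖ ^ r ≤ κ ^ r * (Λ.card : ℝ) ^ (1 + r / d))
    (hY : ∑ i ∈ Λ, ‖Y i - Z i‖ ^ r ≤ κ ^ r * (Λ.card : ℝ) ^ (1 + r / d))
    (hJ : ∀ j ∈ J, ∀ a ∈ A, a + j ∈ Λ)
    (hmult : ∀ i : Fin d → ℤ,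
      ((J.filter (fun j => ∃ a ∈ A, a + j = i)).card : ℝ) ≤ R₀ ^ d) :
    ∑ j ∈ J, ∑ a ∈ A, |Θ (a + j) - Θ j| ^ r * ‖X (a + j) - Y (a + j)‖ ^ r
      ≤ R₀ ^ ((d : ℝ) + r) * R ^ (-r) * (2 * κ) ^ r * (Λ.card : ℝ) ^ (1 + r / d) := by
  classical
  set g : (Fin d → ℤ) → ℝ := fun i => ‖X i - Y i‖ ^ r with hg
  have hg0 : ∀ i, 0 ≤ g i := fun i => Real.rpow_nonneg (norm_nonneg _) _
  have hRR₀ : 0 ≤ R₀ / R := div_nonneg hR₀.le hR.le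
  -- Step 1: pointwise bound on Θ differences
  have step1 : ∑ j ∈ J, ∑ a ∈ A, |Θ (a + j) - Θ j| ^ r * g (a + j)
      ≤ (R₀ / R) ^ r * ∑ j ∈ J, ∑ a ∈ A, g (a + j) := by
    rw [Finset.mul_sum]
    refine Finset.sum_le_sum fun j _ => ?_
    rw [Finset.mul_sum]
    refine Finset.sum_le_sum fun a ha => ?_
    refine mul_le_mul_of_nonneg_right ?_ (hg0 _)
    refine Real.rpow_le_rpow (abs_nonneg _) ?_ (by linarith)
    refine hΘlip (a + j) j fun k => ?_
    simpa using hAdiam a ha k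
  -- Step 2: reindex the double sum
  have step2 : ∑ j ∈ J, ∑ a ∈ A, g (a + j) ≤ R₀ ^ d * ∑ i ∈ Λ, g i := by
    have hinner : ∀ j ∈ J, ∑ a ∈ A, g (a + j)
        = ∑ i ∈ Λ, (if ∃ a ∈ A, a + j = i then g i else 0) := by
      intro j hj
      have himg : ∑ a ∈ A, g (a + j) = ∑ i ∈ A.image (· + j), g i := by
        rw [Finset.sum_image (fun a _ b _ h => by simpa using h)]
      rw [himg, ← Finset.sum_filter]
      refine (Finset.sum_subset ?_ ?_).symm
      · intro i hi
        rw [Finset.mem_filter] at hi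
        obtain ⟨a, ha, rfl⟩ := hi.2
        exact Finset.mem_image.2 ⟨a, ha, rfl⟩
      · intro i hi hni
        exfalso
        apply hni
        rw [Finset.mem_filter]
        obtain ⟨a, ha, rfl⟩ := Finset.mem_image.1 hi
        exact ⟨hJ j hj a ha, a, ha, rfl⟩
    calc ∑ j ∈ J, ∑ a ∈ A, g (a + j)
        = ∑ j ∈ J, ∑ i ∈ Λ, (if ∃ a ∈ A, a + j = i then g i else 0) :=
          Finset.sum_congr rfl hinner
      _ = ∑ i ∈ Λ, ((J.filter (fun j => ∃ a ∈ A, a + j = i)).card : ℝ) * g i := by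
          rw [Finset.sum_comm]
          refine Finset.sum_congr rfl fun i _ => ?_
          rw [← Finset.sum_filter, Finset.sum_const, nsmul_eq_mul]
      _ ≤ ∑ i ∈ Λ, R₀ ^ d * g i :=
          Finset.sum_le_sum fun i _ => mul_le_mul_of_nonneg_right (hmult i) (hg0 i)
      _ = R₀ ^ d * ∑ i ∈ Λ, g i := by rw [Finset.mul_sum]
  -- Step 3: ℓ^r closeness
  have step3 : ∑ i ∈ Λ, g i
      ≤ 2 ^ (r - 1) * (2 * (κ ^ r * (Λ.card : ℝ) ^ (1 + r / d))) := by
    have hpt : ∀ i ∈ Λ, g i ≤ 2 ^ (r - 1) * (‖X i - Z i‖ ^ r + ‖Y i - Z i‖ ^ r) := by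
      intro i _
      have hle : ‖X i - Y i‖ ≤ ‖X i - Z i‖ + ‖Y i - Z i‖ := by
        have : X i - Y i = (X i - Z i) - (Y i - Z i) := by abel
        rw [this]
        exact norm_sub_le _ _
      calc g i ≤ (‖X i - Z i‖ + ‖Y i - Z i‖) ^ r :=
            Real.rpow_le_rpow (norm_nonneg _) hle (by linarith)
        _ ≤ 2 ^ (r - 1) * (‖X i - Z i‖ ^ r + ‖Y i - Z i‖ ^ r) :=
            aux_rpow_add_le (norm_nonneg _) (norm_nonneg _) hr
    calc ∑ i ∈ Λ, g i ≤ ∑ i ∈ Λ, 2 ^ (r - 1) * (‖X i - Z i‖ ^ r + ‖Y i - Z i‖ ^ r) :=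
          Finset.sum_le_sum hpt
      _ = 2 ^ (r - 1) * (∑ i ∈ Λ, ‖X i - Z i‖ ^ r + ∑ i ∈ Λ, ‖Y i - Z i‖ ^ r) := by
          rw [← Finset.sum_add_distrib, Finset.mul_sum]
      _ ≤ 2 ^ (r - 1) * (2 * (κ ^ r * (Λ.card : ℝ) ^ (1 + r / d))) := by
          have h2 : (0:ℝ) ≤ 2 ^ (r - 1) := Real.rpow_nonneg (by norm_num) _
          refine mul_le_mul_of_nonneg_left ?_ h2
          linarith
  -- Combine
  have hcomb : (R₀ / R) ^ r * (R₀ ^ d * (2 ^ (r - 1) * (2 * (κ ^ r * (Λ.card : ℝ) ^ (1 + r / d)))))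
      = R₀ ^ ((d : ℝ) + r) * R ^ (-r) * (2 * κ) ^ r * (Λ.card : ℝ) ^ (1 + r / d) := by
    rw [Real.div_rpow hR₀.le hR.le, Real.rpow_add hR₀, Real.mul_rpow (by norm_num) hκ.le,
      ← Real.rpow_natCast R₀ d, Real.rpow_neg hR.le, div_eq_mul_inv]
    have h2 : (2:ℝ) ^ (r - 1) * 2 = 2 ^ r := by
      rw [Real.rpow_sub (by norm_num : (0:ℝ) < 2), Real.rpow_one]
      field_simp
    rw [← h2]
    ring
  calc ∑ j ∈ J, ∑ a ∈ A, |Θ (a + j) - Θ j| ^ r * ‖X (a + j) - Y (a + j)‖ ^ r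
      ≤ (R₀ / R) ^ r * ∑ j ∈ J, ∑ a ∈ A, g (a + j) := step1
    _ ≤ (R₀ / R) ^ r * (R₀ ^ d * ∑ i ∈ Λ, g i) := by
        refine mul_le_mul_of_nonneg_left step2 (Real.rpow_nonneg hRR₀ _)
    _ ≤ (R₀ / R) ^ r * (R₀ ^ d * (2 ^ (r - 1) * (2 * (κ ^ r * (Λ.card : ℝ) ^ (1 + r / d))))) := by
        refine mul_le_mul_of_nonneg_left ?_ (Real.rpow_nonneg hRR₀ _)
        exact mul_le_mul_of_nonneg_left step3 (pow_nonneg hR₀.le _)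
    _ = R₀ ^ ((d : ℝ) + r) * R ^ (-r) * (2 * κ) ^ r * (Λ.card : ℝ) ^ (1 + r / d) := hcomb
end
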